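/- arXiv:1612.08654 — 4 statements merged into one kernel-verified Lean document; each statement's English description precedes it below -/
import Mathlib

section
/- With d̂ as defined from the metric d via the t-ary chain construction, the sum Σ_{j=0}^{N-1} d̂(α, α·t^h + j mod N) over all j, where α = argmin over i ∈ {0,...,N-1} of (χ[σ=1]·d(i,n-1) + Σ_{j=0}^{N-1} d̂(i, i·t^h + j mod N)), satisfies: Σ_{j=0}^{n-1} d(α, j) ≤ χ[σ=1]·d(α, n-1) + Σ_{j=0}^{N-1} d̂(α, α·t^h + j mod N). -/
/-- The mod-`N` extension of a metric `d` on `{0,...,N-1}`. -/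
def dmod (d : ℕ → ℕ → ℝ) (N x y : ℕ) : ℝ := d (x % N) (y % N)

/-- The `r`-th digit of `j` in base `t`. -/
def digit (t j r : ℕ) : ℕ := j / t ^ r % t

/-- The pseudo-distance `d̂(i, i·t^h + j mod N)`, defined as the length of the
`t`-ary chain from `i` to `i·t^h + j` determined by the base-`t` digits of `j`. -/
def hatd (d : ℕ → ℕ → ℝ) (N t h i j : ℕ) : ℝ :=
  ∑ k ∈ Finset.range h,
    dmod d N
      (i * t ^ k + ∑ ℓ ∈ Finset.range k, digit t j (h - 1 - ℓ) * t ^ (k - 1 - ℓ))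
      (i * t ^ (k + 1) + ∑ ℓ ∈ Finset.range (k + 1), digit t j (h - 1 - ℓ) * t ^ (k - ℓ))

/-!
Each summand `d̂(α, α·t^h + j)` is the length of a chain of `h` steps, all reduced mod `N`,
from `α` to `α·t^h + j'`, where `j'` is `j` read back from its last `h` base-`t` digits.
Since `j < N ≤ n ≤ t^h`, we have `j' = j`, so by the triangle inequality
`d(α, (α·t^h + j) mod N) ≤ d̂(α, α·t^h + j)`. As `j` runs over `{0,…,N-1}`, so does
`(α·t^h + j) mod N`; summing gives `∑_{m<N} d(α, m) ≤ ∑_j d̂(α, α·t^h + j)`, and the term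
`m = n - 1` missing when `σ = 1` is the extra summand `χ[σ=1]·d(α, n-1)`.
-/

open Finset

lemma Nat.le_pow_of_ceil_rpow_one_div_le {n t h : ℕ} (hh : 0 < h)
    (htl : ⌈(n : ℝ) ^ ((1 : ℝ) / h)⌉₊ ≤ t) : n ≤ t ^ h := by
  have hroot : (n : ℝ) ^ ((1 : ℝ) / h) ≤ t := Nat.ceil_le.mp htl
  have hpow : ((n : ℝ) ^ ((1 : ℝ) / h)) ^ h = n := by
    rw [← Real.rpow_natCast, ← Real.rpow_mul n.cast_nonneg, one_div,
      inv_mul_cancel₀ (by positivity), Real.rpow_one]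
  exact_mod_cast hpow ▸ pow_le_pow_left₀ (by positivity) hroot h

lemma Nat.sum_range_digit_mul_pow (t j m : ℕ) :
    ∑ r ∈ range m, digit t j r * t ^ r = j % t ^ m := by
  induction m with
  | zero => simp [Nat.mod_one]
  | succ m ih =>
    rw [sum_range_succ, ih, pow_succ, Nat.mod_mul, digit]
    ring

lemma le_sum_range_of_triangle {α : Type*} {D : α → α → ℝ} {S : Set α}
    (hD0 : ∀ x ∈ S, D x x = 0) (htri : ∀ x ∈ S, ∀ y ∈ S, ∀ z ∈ S, D x z ≤ D x y + D y z)
    {f : ℕ → α} (hf : ∀ k, f k ∈ S) (m : ℕ) :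
    D (f 0) (f m) ≤ ∑ k ∈ range m, D (f k) (f (k + 1)) := by
  induction m with
  | zero => simp [hD0 _ (hf 0)]
  | succ m ih =>
    rw [sum_range_succ]
    linarith [htri _ (hf 0) _ (hf m) _ (hf (m + 1))]

lemma sum_range_add_mod {M : Type*} [AddCommMonoid M] (f : ℕ → M) (c N : ℕ) :
    ∑ j ∈ range N, f ((c + j) % N) = ∑ m ∈ range N, f m := by
  have hinj : Set.InjOn (fun j => (c + j) % N) (range N) := fun a ha b hb hab => by
    have hmod : a % N = b % N := Nat.ModEq.add_left_cancel' c hab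
    rwa [Nat.mod_eq_of_lt (mem_range.mp ha), Nat.mod_eq_of_lt (mem_range.mp hb)] at hmod
  have hsub : (range N).image (fun j => (c + j) % N) ⊆ range N := by
    intro m hm
    obtain ⟨j, hj, rfl⟩ := mem_image.mp hm
    exact mem_range.mpr (Nat.mod_lt _ (pos_of_ne_zero (by rintro rfl; simp at hj)))
  have himage : (range N).image (fun j => (c + j) % N) = range N :=
    eq_of_subset_of_card_le hsub (by rw [card_image_of_injOn hinj])
  rw [← sum_image hinj, himage]

/-- The `k`-th vertex of the chain whose length is `hatd d N t h i j`. -/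
def digitChain (t h i j k : ℕ) : ℕ :=
  i * t ^ k + ∑ ℓ ∈ range k, digit t j (h - 1 - ℓ) * t ^ (k - 1 - ℓ)

lemma digitChain_zero (t h i j : ℕ) : digitChain t h i j 0 = i := by
  simp [digitChain]

lemma digitChain_self {t h j : ℕ} (i : ℕ) (hj : j < t ^ h) :
    digitChain t h i j h = i * t ^ h + j := by
  rw [digitChain, sum_range_reflect (fun r => digit t j r * t ^ r) h,
    Nat.sum_range_digit_mul_pow, Nat.mod_eq_of_lt hj]

lemma hatd_eq_sum_digitChain (d : ℕ → ℕ → ℝ) (N t h i j : ℕ) :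
    hatd d N t h i j =
      ∑ k ∈ range h, dmod d N (digitChain t h i j k) (digitChain t h i j (k + 1)) := by
  refine sum_congr rfl fun k _ => ?_
  have hexp : ∀ ℓ, k + 1 - 1 - ℓ = k - ℓ := fun ℓ => by omega
  simp only [digitChain, hexp]

lemma dmod_le_hatd {n N t h : ℕ} {d : ℕ → ℕ → ℝ} (hN : 0 < N) (hNn : N ≤ n)
    (hd0 : ∀ x < n, d x x = 0) (hdtri : ∀ x < n, ∀ y < n, ∀ z < n, d x z ≤ d x y + d y z)
    (i : ℕ) {j : ℕ} (hj : j < t ^ h) :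
    dmod d N i (i * t ^ h + j) ≤ hatd d N t h i j := by
  have hmem : ∀ x, x % N < n := fun x => (Nat.mod_lt x hN).trans_le hNn
  have hchain := le_sum_range_of_triangle (D := d) (S := Set.Iio n) hd0 hdtri
    (f := fun k => digitChain t h i j k % N) (fun k => hmem _) h
  rw [digitChain_zero, digitChain_self i hj] at hchain
  rw [hatd_eq_sum_digitChain]
  exact hchain

theorem stmt_6_general (n h t σ N : ℕ) (hh : 2 ≤ h)
    (htl : ⌈(n : ℝ) ^ ((1 : ℝ) / h)⌉₊ ≤ t)
    (hσ : σ ≤ 1) (hNdef : N = n - σ)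
    (d : ℕ → ℕ → ℝ)
    (hd0 : ∀ x < n, d x x = 0)
    (hdtri : ∀ x < n, ∀ y < n, ∀ z < n, d x z ≤ d x y + d y z)
    (α : ℕ) (hα : α < N) :
    ∑ j ∈ Finset.range n, d α j ≤
      (if σ = 1 then d α (n - 1) else 0) + ∑ j ∈ Finset.range N, hatd d N t h α j := by
  have hN : 0 < N := by omega
  have hNn : N ≤ n := by omega
  have hth : n ≤ t ^ h := Nat.le_pow_of_ceil_rpow_one_div_le (by omega) htl
  have hsumN : ∑ m ∈ range N, d α m ≤ ∑ j ∈ range N, hatd d N t h α j := by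
    rw [← sum_range_add_mod (d α) (α * t ^ h)]
    refine sum_le_sum fun j hj => ?_
    have hdist := dmod_le_hatd hN hNn hd0 hdtri α ((mem_range.mp hj).trans_le (hNn.trans hth))
    rwa [dmod, Nat.mod_eq_of_lt hα] at hdist
  interval_cases σ
  · simpa [show n = N by omega] using hsumN
  · rw [if_pos rfl, show n = N + 1 by omega, sum_range_succ, Nat.add_sub_cancel]
    linarith

/-- Eq. (20) ≤ Eq. (21) of Lemma 2: the total `d`-distance from the minimizer `α`
is at most `χ[σ=1]·d(α,n-1)` plus its total `d̂`-distance. -/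
theorem stmt_6 (n h t σ N : ℕ) (hn : 2 ≤ n) (hh : 2 ≤ h)
    (ht : Nat.Prime t) (htl : ⌈(n : ℝ) ^ ((1 : ℝ) / h)⌉₊ ≤ t)
    (hσ : σ ≤ 1) (hco : Nat.Coprime t (n - σ)) (hNdef : N = n - σ)
    (d : ℕ → ℕ → ℝ)
    (hd0 : ∀ x < n, d x x = 0)
    (hdpos : ∀ x < n, ∀ y < n, x ≠ y → 0 < d x y)
    (hdsymm : ∀ x < n, ∀ y < n, d x y = d y x)
    (hdtri : ∀ x < n, ∀ y < n, ∀ z < n, d x z ≤ d x y + d y z)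
    (α : ℕ) (hα : α < N)
    (hαmin : ∀ i < N,
      (if σ = 1 then d α (n - 1) else 0) + ∑ j ∈ Finset.range N, hatd d N t h α j ≤
      (if σ = 1 then d i (n - 1) else 0) + ∑ j ∈ Finset.range N, hatd d N t h i j) :
    ∑ j ∈ Finset.range n, d α j ≤
      (if σ = 1 then d α (n - 1) else 0) + ∑ j ∈ Finset.range N, hatd d N t h α j :=
  stmt_6_general n h t σ N hh htl hσ hNdef d hd0 hdtri α hα
end

section
/- Let i' minimize Σ_{j=0}^{n-1} d(i,j) over i ∈ {0,...,N-1} and let α be as defined by minimizing χ[σ=1]·d(i,n-1) + Σ_j d̂(i, i·t^h+j mod N). Then χ[σ=1]·d(α,n-1) + Σ_{j=0}^{N-1} d̂(α, α·t^h + j mod N) ≤ 2h·(min_{i=0}^{N-1} Σ_{j=0}^{n-1} d(i,j)) − χ[σ=1]·((2h−1)·d(i',n−1) − (1/(n−1))·Σ_{j=0}^{n−2} d(i',j)). -/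
/-!
Every step `x ↦ y` of a chain is bounded through the centre `i'` by `d(i', x) + d(i', y)`.
As the starting point `u` runs over `ℤ/N`, each chain vertex `u·t^k + c` runs over all of
`ℤ/N` because `t` is a unit mod `N`, so each of the `h` steps contributes at most
`2 Σ_m d(i', m)` on average over `u`. The minimiser `α` is no worse than this average; for
`σ = 1` the extra term `d(u, n-1) ≤ d(i', u) + d(i', n-1)` is averaged in the same way.
-/

open Finset

lemma sum_range_comp_mul_add_mod {M : Type*} [AddCommMonoid M] {N a : ℕ} (ha : a.Coprime N)
    (c : ℕ) (f : ℕ → M) :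
    ∑ u ∈ range N, f ((u * a + c) % N) = ∑ m ∈ range N, f m := by
  have hmaps : ∀ u ∈ range N, (u * a + c) % N ∈ range N := fun u hu =>
    mem_range.2 (Nat.mod_lt _ (Nat.zero_lt_of_lt (mem_range.1 hu)))
  have hinj : Set.InjOn (fun u => (u * a + c) % N) (range N : Set ℕ) := by
    intro u hu v hv huv
    exact ((Nat.ModEq.add_right_cancel' c huv).cancel_right_of_coprime
      (Nat.coprime_comm.1 ha)).eq_of_lt_of_lt (mem_range.1 hu) (mem_range.1 hv)
  exact sum_nbij _ hmaps hinj
    (surjOn_of_injOn_of_card_le _ hmaps hinj le_rfl) fun _ _ => rfl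

section Metric

variable {n : ℕ} {d : ℕ → ℕ → ℝ}

lemma triangle_left (hdsymm : ∀ x < n, ∀ y < n, d x y = d y x)
    (hdtri : ∀ x < n, ∀ y < n, ∀ z < n, d x z ≤ d x y + d y z)
    {c x y : ℕ} (hc : c < n) (hx : x < n) (hy : y < n) : d x y ≤ d c x + d c y := by
  simpa only [hdsymm x hx c hc] using hdtri x hx c hc y hy

lemma sum_dmod_mul_add_le (hdsymm : ∀ x < n, ∀ y < n, d x y = d y x)
    (hdtri : ∀ x < n, ∀ y < n, ∀ z < n, d x z ≤ d x y + d y z)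
    {N a b c : ℕ} (hNn : N ≤ n) (ha : a.Coprime N) (hb : b.Coprime N) (hc : c < n) (x y : ℕ) :
    ∑ u ∈ range N, dmod d N (u * a + x) (u * b + y) ≤ 2 * ∑ m ∈ range N, d c m := by
  have hmod : ∀ u ∈ range N, ∀ z, z % N < n := fun u hu z =>
    (Nat.mod_lt _ (Nat.zero_lt_of_lt (mem_range.1 hu))).trans_le hNn
  calc ∑ u ∈ range N, dmod d N (u * a + x) (u * b + y)
      ≤ ∑ u ∈ range N, (d c ((u * a + x) % N) + d c ((u * b + y) % N)) :=
        sum_le_sum fun u hu => triangle_left hdsymm hdtri hc (hmod u hu _) (hmod u hu _)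
    _ = 2 * ∑ m ∈ range N, d c m := by
        rw [sum_add_distrib, sum_range_comp_mul_add_mod ha, sum_range_comp_mul_add_mod hb]
        ring

lemma sum_hatd_le (hdsymm : ∀ x < n, ∀ y < n, d x y = d y x)
    (hdtri : ∀ x < n, ∀ y < n, ∀ z < n, d x z ≤ d x y + d y z)
    {N t c : ℕ} (hNn : N ≤ n) (ht : t.Coprime N) (hc : c < n) (h j : ℕ) :
    ∑ u ∈ range N, hatd d N t h u j ≤ 2 * h * ∑ m ∈ range N, d c m := by
  unfold hatd
  rw [sum_comm]
  calc _ ≤ ∑ _k ∈ range h, 2 * ∑ m ∈ range N, d c m :=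
        sum_le_sum fun k _ => sum_dmod_mul_add_le hdsymm hdtri hNn
          (ht.pow_left k) (ht.pow_left (k + 1)) hc _ _
    _ = 2 * h * ∑ m ∈ range N, d c m := by
        rw [sum_const, card_range, nsmul_eq_mul]
        ring

lemma sum_sum_hatd_le (hdsymm : ∀ x < n, ∀ y < n, d x y = d y x)
    (hdtri : ∀ x < n, ∀ y < n, ∀ z < n, d x z ≤ d x y + d y z)
    {N t c : ℕ} (hNn : N ≤ n) (ht : t.Coprime N) (hc : c < n) (h : ℕ) (J : Finset ℕ) :
    ∑ u ∈ range N, ∑ j ∈ J, hatd d N t h u j ≤ #J * (2 * h * ∑ m ∈ range N, d c m) := by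
  rw [sum_comm, ← nsmul_eq_mul]
  exact sum_le_card_nsmul _ _ _ fun j _ => sum_hatd_le hdsymm hdtri hNn ht hc h j

lemma sum_le_sum_add_card_mul (hdsymm : ∀ x < n, ∀ y < n, d x y = d y x)
    (hdtri : ∀ x < n, ∀ y < n, ∀ z < n, d x z ≤ d x y + d y z)
    {N c z : ℕ} (hNn : N ≤ n) (hc : c < n) (hz : z < n) :
    ∑ u ∈ range N, d u z ≤ ∑ m ∈ range N, d c m + N * d c z := by
  calc ∑ u ∈ range N, d u z ≤ ∑ u ∈ range N, (d c u + d c z) :=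
        sum_le_sum fun u hu =>
          triangle_left hdsymm hdtri hc ((mem_range.1 hu).trans_le hNn) hz
    _ = ∑ m ∈ range N, d c m + N * d c z := by
        rw [sum_add_distrib, sum_const, card_range, nsmul_eq_mul]

end Metric

theorem stmt_7_general (n h t σ N : ℕ)
    (hσ : σ ≤ 1) (hco : Nat.Coprime t (n - σ)) (hNdef : N = n - σ)
    (d : ℕ → ℕ → ℝ)
    (hdsymm : ∀ x < n, ∀ y < n, d x y = d y x)
    (hdtri : ∀ x < n, ∀ y < n, ∀ z < n, d x z ≤ d x y + d y z)
    (i' : ℕ) (hi' : i' < N)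
    (α : ℕ)
    (hαmin : ∀ i < N,
      (if σ = 1 then d α (n - 1) else 0) + ∑ j ∈ Finset.range N, hatd d N t h α j ≤
      (if σ = 1 then d i (n - 1) else 0) + ∑ j ∈ Finset.range N, hatd d N t h i j) :
    (if σ = 1 then d α (n - 1) else 0) + ∑ j ∈ Finset.range N, hatd d N t h α j ≤
      2 * h * (∑ j ∈ Finset.range n, d i' j) -
      (if σ = 1 then
        (2 * h - 1) * d i' (n - 1) -
          (1 / ((n : ℝ) - 1)) * ∑ j ∈ Finset.range (n - 1), d i' j
      else 0) := by
  have hNn : N ≤ n := hNdef ▸ n.sub_le σ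
  have hi'n : i' < n := hi'.trans_le hNn
  have hN : (0 : ℝ) < N := by exact_mod_cast Nat.zero_lt_of_lt hi'
  have htN : t.Coprime N := hNdef ▸ hco
  set S := ∑ m ∈ range N, d i' m
  have hhat := sum_sum_hatd_le hdsymm hdtri hNn htN hi'n h (range N)
  have havg := card_nsmul_le_sum (range N) _ _ fun u hu => hαmin u (mem_range.1 hu)
  rw [card_range, nsmul_eq_mul, sum_add_distrib] at havg
  rw [card_range] at hhat
  rcases Nat.le_one_iff_eq_zero_or_eq_one.1 hσ with rfl | rfl
  · obtain rfl : N = n := hNdef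
    simp only [zero_ne_one, if_false, sum_const_zero, zero_add, sub_zero] at havg ⊢
    exact le_of_mul_le_mul_left (havg.trans hhat) hN
  · obtain rfl : n = N + 1 := by omega
    have hχ := sum_le_sum_add_card_mul hdsymm hdtri hNn hi'n (Nat.lt_succ_self N)
    simp only [if_true, Nat.add_sub_cancel] at havg ⊢
    have hF : d α N + ∑ j ∈ range N, hatd d N t h α j ≤
        (S + N * d i' N + N * (2 * h * S)) / N := by
      rw [le_div_iff₀' hN]
      linarith
    have hsplit :
        (S + N * d i' N + N * (2 * h * S)) / N = 2 * h * S + d i' N + 1 / N * S := by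
      field_simp
      ring
    rw [sum_range_succ]
    push_cast
    rw [add_sub_cancel_right]
    linarith

/-- Eq. (21) ≤ Eq. (22) of Lemma 2: the `χ[σ=1]`-corrected total `d̂`-distance from
the minimizer `α` is at most `2h` times the optimal total distance, minus the
`σ = 1` correction term. -/
theorem stmt_7 (n h t σ N : ℕ) (hn : 2 ≤ n) (hh : 2 ≤ h)
    (ht : Nat.Prime t) (htl : ⌈(n : ℝ) ^ ((1 : ℝ) / h)⌉₊ ≤ t)
    (hσ : σ ≤ 1) (hco : Nat.Coprime t (n - σ)) (hNdef : N = n - σ)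
    (d : ℕ → ℕ → ℝ)
    (hd0 : ∀ x < n, d x x = 0)
    (hdpos : ∀ x < n, ∀ y < n, x ≠ y → 0 < d x y)
    (hdsymm : ∀ x < n, ∀ y < n, d x y = d y x)
    (hdtri : ∀ x < n, ∀ y < n, ∀ z < n, d x z ≤ d x y + d y z)
    (i' : ℕ) (hi' : i' < N)
    (hi'min : ∀ i < N, ∑ j ∈ Finset.range n, d i' j ≤ ∑ j ∈ Finset.range n, d i j)
    (α : ℕ) (hα : α < N)
    (hαmin : ∀ i < N,
      (if σ = 1 then d α (n - 1) else 0) + ∑ j ∈ Finset.range N, hatd d N t h α j ≤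
      (if σ = 1 then d i (n - 1) else 0) + ∑ j ∈ Finset.range N, hatd d N t h i j) :
    (if σ = 1 then d α (n - 1) else 0) + ∑ j ∈ Finset.range N, hatd d N t h α j ≤
      2 * h * (∑ j ∈ Finset.range n, d i' j) -
      (if σ = 1 then
        (2 * h - 1) * d i' (n - 1) -
          (1 / ((n : ℝ) - 1)) * ∑ j ∈ Finset.range (n - 1), d i' j
      else 0) :=
  stmt_7_general n h t σ N hσ hco hNdef d hdsymm hdtri i' hi' α hαmin
end

section
/- Suppose (2h−1)·d(i', n−1) < (1/(n−1))·Σ_{m=0}^{n−2} d(i', m), where i' minimizes Σ_{j=0}^{n−1} d(i,j) over i ∈ {0,...,n−2} and h ≥ 2. Then Σ_{j=0}^{n−1} d(n−1, j) ≤ 2·Σ_{j=0}^{n−1} d(i', j). -/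
/-!
By the triangle inequality through `i'`, `Σ_j d(n−1, j) ≤ n·d(i', n−1) + Σ_j d(i', j)`.
Since `2h − 1 ≥ 1`, the hypothesis gives `(n − 1)·d(i', n−1) ≤ Σ_{m<n−1} d(i', m)`, and adding
`d(i', n−1)` to both sides bounds `n·d(i', n−1)` by `Σ_j d(i', j)`.
-/

open Finset

lemma nonneg_of_triangle {α : Type*} {d : α → α → ℝ} {x y : α} (h0 : d x x = 0)
    (hsymm : d x y = d y x) (htri : d x x ≤ d x y + d y x) : 0 ≤ d x y := by
  linarith

lemma mul_le_of_mul_lt_one_div_mul {a S m k : ℝ} (ha : 0 ≤ a) (hm : 0 < m) (hk : 1 ≤ k)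
    (h : k * a < 1 / m * S) : m * a ≤ S := by
  rw [one_div_mul_eq_div, lt_div_iff₀ hm] at h
  nlinarith [mul_nonneg (mul_nonneg (sub_nonneg.mpr hk) ha) hm.le]

lemma sum_le_card_mul_add_sum {ι : Type*} {d : ι → ι → ℝ} {s : Finset ι} {x c : ι}
    (htri : ∀ j ∈ s, d x j ≤ d c x + d c j) :
    ∑ j ∈ s, d x j ≤ #s * d c x + ∑ j ∈ s, d c j := by
  calc ∑ j ∈ s, d x j ≤ ∑ j ∈ s, (d c x + d c j) := sum_le_sum htri
    _ = #s * d c x + ∑ j ∈ s, d c j := by rw [sum_add_distrib, sum_const, nsmul_eq_mul]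

theorem stmt_9_general (n h : ℕ) (hh : 2 ≤ h)
    (d : ℕ → ℕ → ℝ)
    (hd0 : ∀ x < n, d x x = 0)
    (hdsymm : ∀ x < n, ∀ y < n, d x y = d y x)
    (hdtri : ∀ x < n, ∀ y < n, ∀ z < n, d x z ≤ d x y + d y z)
    (i' : ℕ) (hi' : i' < n - 1)
    (hcase : (2 * h - 1 : ℝ) * d i' (n - 1) <
      (1 / ((n : ℝ) - 1)) * ∑ m ∈ Finset.range (n - 1), d i' m) :
    ∑ j ∈ Finset.range n, d (n - 1) j ≤ 2 * ∑ j ∈ Finset.range n, d i' j := by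
  have hlast : n - 1 < n := by omega
  have hi'n : i' < n := by omega
  have hdist_nonneg : 0 ≤ d i' (n - 1) := nonneg_of_triangle (hd0 i' hi'n)
    (hdsymm i' hi'n (n - 1) hlast) (hdtri i' hi'n (n - 1) hlast i' hi'n)
  have hsplit : ∑ j ∈ range n, d i' j = ∑ m ∈ range (n - 1), d i' m + d i' (n - 1) := by
    conv_lhs => rw [show n = n - 1 + 1 by omega]
    exact sum_range_succ _ _
  have hn : (2 : ℝ) ≤ n := by exact_mod_cast (by omega : 2 ≤ n)
  have hh' : (2 : ℝ) ≤ h := by exact_mod_cast hh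
  have hbound : ((n : ℝ) - 1) * d i' (n - 1) ≤ ∑ m ∈ range (n - 1), d i' m :=
    mul_le_of_mul_lt_one_div_mul hdist_nonneg (by linarith) (by linarith)
      hcase
  have htri : ∑ j ∈ range n, d (n - 1) j ≤ n * d i' (n - 1) + ∑ j ∈ range n, d i' j := by
    have := sum_le_card_mul_add_sum fun j hj =>
      (hdsymm i' hi'n (n - 1) hlast) ▸ hdtri (n - 1) hlast i' hi'n j (mem_range.mp hj)
    rwa [card_range] at this
  linarith

/-- Case (2) of Lemma 3: if `(2h−1)·d(i',n−1) < (1/(n−1))·Σ_{m=0}^{n−2} d(i',m)`,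
then the total distance from `n−1` is at most twice the total distance from `i'`. -/
theorem stmt_9 (n h : ℕ) (hn : 2 ≤ n) (hh : 2 ≤ h)
    (d : ℕ → ℕ → ℝ)
    (hd0 : ∀ x < n, d x x = 0)
    (hdpos : ∀ x < n, ∀ y < n, x ≠ y → 0 < d x y)
    (hdsymm : ∀ x < n, ∀ y < n, d x y = d y x)
    (hdtri : ∀ x < n, ∀ y < n, ∀ z < n, d x z ≤ d x y + d y z)
    (i' : ℕ) (hi' : i' < n - 1)
    (hi'min : ∀ i < n - 1, ∑ j ∈ Finset.range n, d i' j ≤ ∑ j ∈ Finset.range n, d i j)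
    (hcase : (2 * h - 1 : ℝ) * d i' (n - 1) <
      (1 / ((n : ℝ) - 1)) * ∑ m ∈ Finset.range (n - 1), d i' m) :
    ∑ j ∈ Finset.range n, d (n - 1) j ≤ 2 * ∑ j ∈ Finset.range n, d i' j :=
  stmt_9_general n h hh d hd0 hdsymm hdtri i' hi' hcase
end

section
/- With f and g defined as the constrained and unconstrained (m+1)-level chain sums respectively, for all i ∈ {0,...,N−1} and m ∈ {1,...,h−1}: f(i,m) = (1 + Σ_{r=0}^{m−1} s'_r·t^r)·d^{(N)}(i, i·t + s'_m) + t^m·Σ_{s=0}^{s'_m−1} d^{(N)}(i, i·t + s) + f((i·t + s'_m) mod N, m−1) + Σ_{s=0}^{s'_m−1} g((i·t + s) mod N, m−1). -/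
/-- Extend a digit tuple `s : Fin m → Fin t` to a function `ℕ → ℕ` (zero beyond `m`). -/
def extF {t : ℕ} (m : ℕ) (s : Fin m → Fin t) : ℕ → ℕ :=
  fun ℓ => if hℓ : ℓ < m then (s ⟨ℓ, hℓ⟩ : ℕ) else 0

/-- The `(m+1)`-level chain sum
`Σ_{k=0}^{m} D(i·t^k + Σ_{ℓ=0}^{k−1} s_{m−ℓ}·t^{k−1−ℓ}, i·t^{k+1} + Σ_{ℓ=0}^{k} s_{m−ℓ}·t^{k−ℓ})`
for a digit assignment `s` (here `D` plays the role of `d^{(N)}`). -/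
def chainTerm (D : ℕ → ℕ → ℝ) (t i m : ℕ) (s : ℕ → ℕ) : ℝ :=
  ∑ k ∈ Finset.range (m + 1),
    D (i * t ^ k + ∑ ℓ ∈ Finset.range k, s (m - ℓ) * t ^ (k - 1 - ℓ))
      (i * t ^ (k + 1) + ∑ ℓ ∈ Finset.range (k + 1), s (m - ℓ) * t ^ (k - ℓ))

/-- `f(i,m)`: the chain sum over all digit tuples `(s_m,...,s_0) ∈ {0,...,t−1}^{m+1}`
whose value `Σ_r s_r·t^r` does not exceed `Σ_r s'_r·t^r`. -/
def fsum (D : ℕ → ℕ → ℝ) (t i m : ℕ) (s' : ℕ → ℕ) : ℝ :=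
  ∑ s : Fin (m + 1) → Fin t,
    if ∑ r ∈ Finset.range (m + 1), extF (m + 1) s r * t ^ r ≤
        ∑ r ∈ Finset.range (m + 1), s' r * t ^ r then
      chainTerm D t i m (extF (m + 1) s)
    else 0

/-- `g(i,m)`: the chain sum over all digit tuples `(s_m,...,s_0) ∈ {0,...,t−1}^{m+1}`. -/
def gsum (D : ℕ → ℕ → ℝ) (t i m : ℕ) : ℝ :=
  ∑ s : Fin (m + 1) → Fin t, chainTerm D t i m (extF (m + 1) s)

open Finset

section Tuples

variable {t : ℕ}

lemma digit_lt (ht : 0 < t) (j r : ℕ) : digit t j r < t := Nat.mod_lt _ ht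

lemma sum_range_extF_mul_pow {m : ℕ} (s : Fin m → Fin t) :
    ∑ r ∈ range m, extF m s r * t ^ r = finFunctionFinEquiv s := by
  rw [finFunctionFinEquiv_apply, ← Fin.sum_univ_eq_sum_range]
  simp [extF]

lemma sum_range_mul_pow_lt {s : ℕ → ℕ} (hs : ∀ r, s r < t) (m : ℕ) :
    ∑ r ∈ range m, s r * t ^ r < t ^ m := by
  rw [← Fin.sum_univ_eq_sum_range (fun r => s r * t ^ r)]
  exact (finFunctionFinEquiv fun r : Fin m => (⟨s r, hs r⟩ : Fin t)).isLt

lemma extF_snoc_of_lt {m r : ℕ} (s : Fin m → Fin t) (a : Fin t) (hr : r < m) :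
    extF (m + 1) (Fin.snoc s a : Fin (m + 1) → Fin t) r = extF m s r := by
  have h := Fin.snoc_castSucc (α := fun _ => Fin t) (p := s) (x := a) ⟨r, hr⟩
  simp only [Fin.castSucc_mk] at h
  simp [extF, hr, Nat.lt_succ_of_lt hr, h]

lemma extF_snoc_self {m : ℕ} (s : Fin m → Fin t) (a : Fin t) :
    extF (m + 1) (Fin.snoc s a : Fin (m + 1) → Fin t) m = a := by
  have h := Fin.snoc_last (α := fun _ => Fin t) (p := s) (x := a)
  simp only [Fin.last] at h
  simp [extF, h]

lemma sum_range_extF_snoc_mul_pow {m : ℕ} (s : Fin m → Fin t) (a : Fin t) :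
    ∑ r ∈ range (m + 1), extF (m + 1) (Fin.snoc s a : Fin (m + 1) → Fin t) r * t ^ r =
      a * t ^ m + ∑ r ∈ range m, extF m s r * t ^ r := by
  rw [sum_range_succ, extF_snoc_self, add_comm]
  congr 1
  exact sum_congr rfl fun r hr => by rw [extF_snoc_of_lt s a (mem_range.mp hr)]

lemma sum_fun_fin_succ {M : Type*} [AddCommMonoid M] {m : ℕ} (F : (Fin (m + 1) → Fin t) → M) :
    ∑ s, F s = ∑ a : Fin t, ∑ s : Fin m → Fin t, F (Fin.snoc s a) := by
  rw [← (Fin.snocEquiv fun _ => Fin t).sum_comp, Fintype.sum_prod_type]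
  rfl

lemma sum_ite_sum_range_extF_mul_pow_le {m V : ℕ} (hV : V < t ^ m) (c : ℝ) :
    ∑ s : Fin m → Fin t, (if ∑ r ∈ range m, extF m s r * t ^ r ≤ V then c else 0) =
      (V + 1 : ℕ) * c := by
  simp only [sum_range_extF_mul_pow]
  rw [finFunctionFinEquiv.sum_comp (fun x : Fin (t ^ m) => if (x : ℕ) ≤ V then c else 0),
    Fin.sum_univ_eq_sum_range (fun x => if x ≤ V then c else 0), ← sum_filter]
  have hfilter : (range (t ^ m)).filter (· ≤ V) = range (V + 1) := by
    ext x
    simp only [mem_filter, mem_range]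
    omega
  rw [hfilter, sum_const, card_range, nsmul_eq_mul]

end Tuples

lemma chainTerm_congr (D : ℕ → ℕ → ℝ) (t i m : ℕ) {s₁ s₂ : ℕ → ℕ}
    (hs : ∀ r ≤ m, s₁ r = s₂ r) : chainTerm D t i m s₁ = chainTerm D t i m s₂ := by
  unfold chainTerm
  refine sum_congr rfl fun k _ => ?_
  congr 2 <;> exact sum_congr rfl fun ℓ _ => by rw [hs _ (Nat.sub_le _ _)]

lemma chain_point_succ (t i m k : ℕ) (s : ℕ → ℕ) :
    i * t ^ (k + 1) + ∑ ℓ ∈ range (k + 1), s (m + 1 - ℓ) * t ^ (k - ℓ) =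
      (i * t + s (m + 1)) * t ^ k + ∑ ℓ ∈ range k, s (m - ℓ) * t ^ (k - 1 - ℓ) := by
  rw [sum_range_succ']
  have hshift : ∀ ℓ ∈ range k, s (m + 1 - (ℓ + 1)) * t ^ (k - (ℓ + 1)) =
      s (m - ℓ) * t ^ (k - 1 - ℓ) := fun ℓ _ => by
    rw [Nat.add_sub_add_right, Nat.sub_sub, add_comm 1 ℓ]
  rw [sum_congr rfl hshift, Nat.sub_zero, Nat.sub_zero, pow_succ]
  ring

lemma chainTerm_succ (D : ℕ → ℕ → ℝ) (t i m : ℕ) (s : ℕ → ℕ) :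
    chainTerm D t i (m + 1) s =
      D i (i * t + s (m + 1)) + chainTerm D t (i * t + s (m + 1)) m s := by
  unfold chainTerm
  rw [sum_range_succ', add_comm]
  congr 1
  · simp
  · refine sum_congr rfl fun k _ => ?_
    have h := chain_point_succ t i m (k + 1) s
    simp only [Nat.add_sub_cancel] at h ⊢
    rw [chain_point_succ, h]

lemma chainTerm_extF_snoc (D : ℕ → ℕ → ℝ) {t : ℕ} (i m : ℕ) (s : Fin (m + 1) → Fin t)
    (a : Fin t) :
    chainTerm D t i (m + 1) (extF (m + 2) (Fin.snoc s a : Fin (m + 2) → Fin t)) =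
      D i (i * t + a) + chainTerm D t (i * t + a) m (extF (m + 1) s) := by
  rw [chainTerm_succ, extF_snoc_self]
  exact congrArg _ (chainTerm_congr D t _ m fun r hr => extF_snoc_of_lt s a (by omega))

lemma chainTerm_dmod_mod (d : ℕ → ℕ → ℝ) (N t p m : ℕ) (s : ℕ → ℕ) :
    chainTerm (dmod d N) t (p % N) m s = chainTerm (dmod d N) t p m s := by
  unfold chainTerm dmod
  refine sum_congr rfl fun k _ => ?_
  congr 1 <;> exact ((Nat.mod_modEq p N).mul_right _).add_right _

lemma fsum_dmod_mod (d : ℕ → ℕ → ℝ) (N t p m : ℕ) (s' : ℕ → ℕ) :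
    fsum (dmod d N) t (p % N) m s' = fsum (dmod d N) t p m s' := by
  simp only [fsum, chainTerm_dmod_mod]

lemma gsum_dmod_mod (d : ℕ → ℕ → ℝ) (N t p m : ℕ) :
    gsum (dmod d N) t (p % N) m = gsum (dmod d N) t p m := by
  simp only [gsum, chainTerm_dmod_mod]

lemma mul_add_le_mul_add_iff {a b x y T : ℕ} (hx : x < T) (hy : y < T) :
    a * T + x ≤ b * T + y ↔ a < b ∨ a = b ∧ x ≤ y := by
  rcases lt_trichotomy a b with hab | rfl | hab
  · have : (a + 1) * T ≤ b * T := Nat.mul_le_mul_right _ hab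
    simp only [hab, true_or, iff_true]
    nlinarith
  · simp
  · have : (b + 1) * T ≤ a * T := Nat.mul_le_mul_right _ hab
    simp only [hab.not_gt, hab.ne', false_or, false_and, iff_false, not_le]
    nlinarith

theorem fsum_succ (D : ℕ → ℕ → ℝ) {t : ℕ} (i m : ℕ) {s' : ℕ → ℕ} (hs' : ∀ r, s' r < t) :
    fsum D t i (m + 1) s' =
      ((1 + ∑ r ∈ range (m + 1), s' r * t ^ r : ℕ) : ℝ) * D i (i * t + s' (m + 1)) +
        (t : ℝ) ^ (m + 1) * ∑ a ∈ range (s' (m + 1)), D i (i * t + a) +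
        fsum D t (i * t + s' (m + 1)) m s' +
        ∑ a ∈ range (s' (m + 1)), gsum D t (i * t + a) m := by
  set A := s' (m + 1)
  set V := ∑ r ∈ range (m + 1), s' r * t ^ r
  set T := t ^ (m + 1)
  have hV : V < T := sum_range_mul_pow_lt hs' (m + 1)
  have hval (s : Fin (m + 1) → Fin t) : ∑ r ∈ range (m + 1), extF (m + 1) s r * t ^ r < T := by
    rw [sum_range_extF_mul_pow]; exact Fin.isLt _
  let row (a : ℕ) : ℝ := ∑ s : Fin (m + 1) → Fin t,
    if a * T + ∑ r ∈ range (m + 1), extF (m + 1) s r * t ^ r ≤ A * T + V then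
      D i (i * t + a) + chainTerm D t (i * t + a) m (extF (m + 1) s)
    else 0
  have hrows : fsum D t i (m + 1) s' = ∑ a ∈ range t, row a := by
    rw [fsum, sum_fun_fin_succ, ← Fin.sum_univ_eq_sum_range row]
    refine sum_congr rfl fun a _ => sum_congr rfl fun s _ => ?_
    rw [sum_range_extF_snoc_mul_pow, chainTerm_extF_snoc,
      sum_range_succ (fun r => s' r * t ^ r) (m + 1), add_comm V]
  have hbelow : ∀ a ∈ range A, row a = (t : ℝ) ^ (m + 1) * D i (i * t + a) +
      gsum D t (i * t + a) m := by
    intro a ha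
    have hlt : ∀ s : Fin (m + 1) → Fin t,
        a * T + ∑ r ∈ range (m + 1), extF (m + 1) s r * t ^ r ≤ A * T + V := fun s =>
      (mul_add_le_mul_add_iff (hval s) hV).2 (Or.inl (mem_range.mp ha))
    simp only [row, hlt, if_true, sum_add_distrib, sum_const, card_univ, Fintype.card_fun,
      Fintype.card_fin, nsmul_eq_mul, gsum]
    push_cast; rfl
  have hat : row A = ((1 + V : ℕ) : ℝ) * D i (i * t + A) + fsum D t (i * t + A) m s' := by
    simp only [row, Nat.add_le_add_iff_left, ite_add_zero, sum_add_distrib,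
      sum_ite_sum_range_extF_mul_pow_le hV, fsum, add_comm 1 V]
    rfl
  have habove : ∀ a ∈ Ico (A + 1) t, row a = 0 := by
    intro a ha
    refine sum_eq_zero fun s _ => if_neg ?_
    rw [mul_add_le_mul_add_iff (hval s) hV]
    have := (mem_Ico.mp ha).1
    omega
  rw [hrows, ← sum_range_add_sum_Ico _ (hs' (m + 1) : A + 1 ≤ t), sum_eq_zero habove,
    sum_range_succ, sum_congr rfl hbelow, hat, sum_add_distrib, ← mul_sum]
  ring

theorem stmt_14_general (h t N : ℕ)
    (ht : Nat.Prime t)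
    (d : ℕ → ℕ → ℝ) :
    ∀ i < N, ∀ m, 1 ≤ m → m ≤ h - 1 →
      fsum (dmod d N) t i m (digit t (N - 1)) =
        ((1 + ∑ r ∈ Finset.range m, digit t (N - 1) r * t ^ r : ℕ) : ℝ) *
            dmod d N i (i * t + digit t (N - 1) m) +
          (t : ℝ) ^ m *
            ∑ s ∈ Finset.range (digit t (N - 1) m), dmod d N i (i * t + s) +
          fsum (dmod d N) t ((i * t + digit t (N - 1) m) % N) (m - 1) (digit t (N - 1)) +
          ∑ s ∈ Finset.range (digit t (N - 1) m),
            gsum (dmod d N) t ((i * t + s) % N) (m - 1) := by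
  rintro i - m hm -
  obtain ⟨m, rfl⟩ : ∃ k, m = k + 1 := ⟨m - 1, by omega⟩
  rw [fsum_succ _ i m (digit_lt ht.pos _), Nat.add_sub_cancel, fsum_dmod_mod]
  simp only [gsum_dmod_mod]

/-- Lemma 8 (recurrence for `f`): for `i ∈ {0,...,N−1}` and `m ∈ {1,...,h−1}`,
`f(i,m) = (1 + Σ_{r<m} s'_r·t^r)·d^{(N)}(i, i·t+s'_m) + t^m·Σ_{s<s'_m} d^{(N)}(i, i·t+s)
 + f((i·t+s'_m) mod N, m−1) + Σ_{s<s'_m} g((i·t+s) mod N, m−1)`,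
where `s'` is the `t`-ary representation of `N−1`. -/
theorem stmt_14 (n h t σ N : ℕ) (hn : 2 ≤ n) (hh : 2 ≤ h)
    (ht : Nat.Prime t) (htl : ⌈(n : ℝ) ^ ((1 : ℝ) / h)⌉₊ ≤ t)
    (hσ : σ ≤ 1) (hNdef : N = n - σ)
    (d : ℕ → ℕ → ℝ)
    (hd0 : ∀ x < n, d x x = 0)
    (hdpos : ∀ x < n, ∀ y < n, x ≠ y → 0 < d x y)
    (hdsymm : ∀ x < n, ∀ y < n, d x y = d y x)
    (hdtri : ∀ x < n, ∀ y < n, ∀ z < n, d x z ≤ d x y + d y z) :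
    ∀ i < N, ∀ m, 1 ≤ m → m ≤ h - 1 →
      fsum (dmod d N) t i m (digit t (N - 1)) =
        ((1 + ∑ r ∈ Finset.range m, digit t (N - 1) r * t ^ r : ℕ) : ℝ) *
            dmod d N i (i * t + digit t (N - 1) m) +
          (t : ℝ) ^ m *
            ∑ s ∈ Finset.range (digit t (N - 1) m), dmod d N i (i * t + s) +
          fsum (dmod d N) t ((i * t + digit t (N - 1) m) % N) (m - 1) (digit t (N - 1)) +
          ∑ s ∈ Finset.range (digit t (N - 1) m),
            gsum (dmod d N) t ((i * t + s) % N) (m - 1) :=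
  stmt_14_general h t N ht d
end
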